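/- arXiv:1804.02731 — 8 statements merged into one kernel-verified Lean document; each statement's English description precedes it below -/
import Mathlib

section
/- Let I' be an instance of Hospitals/Residents with Ties constructed from an SPA-ST instance I by the cloning construction (where for each lecturer l_k with sum of project capacities exceeding d_k, f_k = (Σ_{p_j∈P_k} c_j) − d_k dummy residents are created, each dummy resident's preference list is a single tie containing all hospitals corresponding to projects of l_k, and each such hospital has a tie of all these dummy residents prepended to its preference list). Then in every stable matching of I', every dummy resident is assigned. -/
open scoped Classical
open Finset

/-- An instance of the Student-Project Allocation problem with lecturer
preferences over students, with ties (SPA-ST).  Preferences are encoded by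
rank functions: a lower rank means more preferred; equal ranks encode ties. -/
structure SPAST (S P L : Type) where
  /-- the lecturer offering each project -/
  lec : P → L
  /-- project capacities -/
  cap : P → ℕ
  /-- lecturer capacities -/
  dcap : L → ℕ
  /-- `acc s p` iff student `s` finds project `p` acceptable -/
  acc : S → P → Prop
  /-- student rank function (lower is better); meaningful on acceptable projects -/
  sRank : S → P → ℕ
  /-- lecturer rank function over students (lower is better) -/
  lRank : L → S → ℕ

variable {S P L : Type}

/-- students assigned to a project in `M` -/
noncomputable def projAssignees [Fintype S] (M : S → Option P) (p : P) : Finset S :=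
  Finset.univ.filter (fun s => M s = some p)

/-- students assigned to some project of lecturer `k` in `M` -/
noncomputable def lecAssignees [Fintype S] (I : SPAST S P L) (M : S → Option P) (k : L) :
    Finset S :=
  Finset.univ.filter (fun s => ∃ p, M s = some p ∧ I.lec p = k)

def IsMatching [Fintype S] (I : SPAST S P L) (M : S → Option P) : Prop :=
  (∀ s p, M s = some p → I.acc s p) ∧
  (∀ p, (projAssignees M p).card ≤ I.cap p) ∧
  (∀ k, (lecAssignees I M k).card ≤ I.dcap k)

def ProjFull [Fintype S] (I : SPAST S P L) (M : S → Option P) (p : P) : Prop :=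
  (projAssignees M p).card = I.cap p

def LecFull [Fintype S] (I : SPAST S P L) (M : S → Option P) (k : L) : Prop :=
  (lecAssignees I M k).card = I.dcap k

/-- `s` finds `p` acceptable and is unassigned or strictly prefers `p` to `M(s)`. -/
def WantsToMove (I : SPAST S P L) (M : S → Option P) (s : S) (p : P) : Prop :=
  I.acc s p ∧ (M s = none ∨ ∃ p', M s = some p' ∧ I.sRank s p < I.sRank s p')

/-- `(s, p)` is a blocking pair of `M`. -/
def Blocks [Fintype S] (I : SPAST S P L) (M : S → Option P) (s : S) (p : P) : Prop :=
  WantsToMove I M s p ∧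
  ( (¬ ProjFull I M p ∧ ¬ LecFull I M (I.lec p)) ∨
    (¬ ProjFull I M p ∧ LecFull I M (I.lec p) ∧
      (s ∈ lecAssignees I M (I.lec p) ∨
       ∃ s' ∈ lecAssignees I M (I.lec p), I.lRank (I.lec p) s < I.lRank (I.lec p) s')) ∨
    (ProjFull I M p ∧
       ∃ s' ∈ projAssignees M p, I.lRank (I.lec p) s < I.lRank (I.lec p) s') )

def Stable [Fintype S] (I : SPAST S P L) (M : S → Option P) : Prop :=
  IsMatching I M ∧ ∀ s p, ¬ Blocks I M s p

/-- the number of assigned agents in a matching -/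
noncomputable def msize {A B : Type} [Fintype A] (M : A → Option B) : ℕ :=
  (Finset.univ.filter (fun a => (M a).isSome)).card

/-- An instance of the Hospitals/Residents problem with Ties (HRT), encoded by
rank functions (lower rank = more preferred; equal ranks are ties). -/
structure HRT (R H : Type) where
  /-- hospital capacities -/
  cap : H → ℕ
  /-- `acc r h` iff `(r, h)` is an acceptable pair -/
  acc : R → H → Prop
  /-- resident rank function over hospitals -/
  rRank : R → H → ℕ
  /-- hospital rank function over residents -/
  hRank : H → R → ℕ

/-- residents assigned to a hospital -/
noncomputable def hospAssignees {R H : Type} [Fintype R] (M : R → Option H) (h : H) :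
    Finset R :=
  Finset.univ.filter (fun r => M r = some h)

def HIsMatching {R H : Type} [Fintype R] (J : HRT R H) (M : R → Option H) : Prop :=
  (∀ r h, M r = some h → J.acc r h) ∧ (∀ h, (hospAssignees M h).card ≤ J.cap h)

/-- `(r, h)` is a blocking pair of `M` in HRT -/
def HBlocks {R H : Type} [Fintype R] (J : HRT R H) (M : R → Option H) (r : R) (h : H) :
    Prop :=
  J.acc r h ∧
  (M r = none ∨ ∃ h', M r = some h' ∧ J.rRank r h < J.rRank r h') ∧
  ((hospAssignees M h).card < J.cap h ∨
    ∃ r' ∈ hospAssignees M h, J.hRank h r < J.hRank h r')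

def HStable {R H : Type} [Fintype R] (J : HRT R H) (M : R → Option H) : Prop :=
  HIsMatching J M ∧ ∀ r h, ¬ HBlocks J M r h

/-- `f_k`: the number of dummy residents created for lecturer `k`, namely
`max 0 ((Σ_{p ∈ P_k} c_p) - d_k)` (truncated ℕ-subtraction). -/
noncomputable def fk [Fintype P] (I : SPAST S P L) (k : L) : ℕ :=
  (∑ p ∈ Finset.univ.filter (fun p => I.lec p = k), I.cap p) - I.dcap k

/-- the dummy residents of the cloned instance -/
abbrev Dummy [Fintype P] (I : SPAST S P L) : Type := Σ k : L, Fin (fk I k)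

/-- The cloning construction from SPA-ST to HRT.  Residents are students plus
dummies; hospitals are the projects with their capacities.  A student-resident
inherits the student's preferences; a dummy of lecturer `k` finds exactly the
hospitals of `k` acceptable, all in a single first-place tie (rank `0`), and
each hospital of `k` places all dummies of `k` in a first-place tie (rank `0`)
ahead of the real residents, whose lecturer-ranks are shifted up by one. -/
noncomputable def clone [Fintype P] (I : SPAST S P L) : HRT (S ⊕ Dummy I) P where
  cap := I.cap
  acc := fun r h =>
    match r with
    | Sum.inl s => I.acc s h
    | Sum.inr d => I.lec h = d.1
  rRank := fun r h =>
    match r with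
    | Sum.inl s => I.sRank s h
    | Sum.inr _ => 0
  hRank := fun h r =>
    match r with
    | Sum.inl s => I.lRank (I.lec h) s + 1
    | Sum.inr _ => 0

/-!
If the dummy `⟨k, i⟩` were unassigned, it would find every project `p` of lecturer `k` acceptable,
so stability would force each such `p` to be full, with assignees that `p` ranks no worse than a
dummy, i.e. with other dummies of `k`. The projects of `k` would then hold `Σ c_p` residents out of
only `f_k - 1 < Σ c_p` dummies.
-/

theorem HStable.card_eq_cap_and_hRank_le {R H : Type} [Fintype R] {J : HRT R H}
    {M : R → Option H} (hM : HStable J M) {r : R} {h : H} (hr : M r = none) (hacc : J.acc r h) :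
    (hospAssignees M h).card = J.cap h ∧ ∀ r' ∈ hospAssignees M h, J.hRank h r' ≤ J.hRank h r := by
  have hnb : ¬ ((hospAssignees M h).card < J.cap h ∨
      ∃ r' ∈ hospAssignees M h, J.hRank h r < J.hRank h r') :=
    fun hfree => hM.2 r h ⟨hacc, Or.inl hr, hfree⟩
  push Not at hnb
  exact ⟨le_antisymm (hM.1.2 h) hnb.1, hnb.2⟩

theorem pairwiseDisjoint_hospAssignees {R H : Type} [Fintype R] (M : R → Option H)
    (s : Set H) : s.PairwiseDisjoint (hospAssignees M) := by
  intro h _ h' _ hne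
  refine Finset.disjoint_left.mpr fun r hr hr' => hne ?_
  simp only [hospAssignees, Finset.mem_filter] at hr hr'
  exact Option.some.inj (hr.2.symm.trans hr'.2)

theorem HStable.clone_card_eq_cap_and_subset {I : SPAST S P L} [Fintype S] [Fintype P]
    [Fintype L] {M : S ⊕ Dummy I → Option P} (hM : HStable (clone I) M) {k : L}
    {i : Fin (fk I k)} (hi : M (Sum.inr ⟨k, i⟩) = none) {p : P} (hp : I.lec p = k) :
    (hospAssignees M p).card = I.cap p ∧
      hospAssignees M p ⊆ (Finset.univ.erase i).image (fun j => Sum.inr ⟨k, j⟩) := by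
  obtain ⟨hfull, hrank⟩ := hM.card_eq_cap_and_hRank_le hi hp
  refine ⟨hfull, fun r hr => ?_⟩
  have hrp : M r = some p := (Finset.mem_filter.mp hr).2
  rcases r with s | ⟨k', j⟩
  · -- students are ranked strictly below every dummy
    simpa [clone] using hrank _ hr
  · obtain rfl : k' = k := (hM.1.1 _ p hrp).symm.trans hp
    refine Finset.mem_image.mpr ⟨j, Finset.mem_erase.mpr ⟨?_, Finset.mem_univ j⟩, rfl⟩
    rintro rfl
    simp [hi] at hrp

/-- In the HRT instance obtained from an SPA-ST instance by the
cloning construction, every dummy resident is assigned in every stable matching. -/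
theorem stmt1 [Fintype S] [Fintype P] [Fintype L] (I : SPAST S P L)
    (M : S ⊕ Dummy I → Option P) (hM : HStable (clone I) M) :
    ∀ d : Dummy I, (M (Sum.inr d)).isSome := by
  rintro ⟨k, i⟩
  by_contra hi
  rw [Option.not_isSome_iff_eq_none] at hi
  set Pk := Finset.univ.filter (fun p => I.lec p = k)
  have hclone : ∀ p ∈ Pk, (hospAssignees M p).card = I.cap p ∧
      hospAssignees M p ⊆ (Finset.univ.erase i).image (fun j => Sum.inr ⟨k, j⟩) := fun p hp =>
    hM.clone_card_eq_cap_and_subset hi (Finset.mem_filter.mp hp).2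
  have hfilled : (Pk.biUnion (hospAssignees M)).card = ∑ p ∈ Pk, I.cap p := by
    rw [Finset.card_biUnion (pairwiseDisjoint_hospAssignees M _)]
    exact Finset.sum_congr rfl fun p hp => (hclone p hp).1
  have hfew : (Pk.biUnion (hospAssignees M)).card ≤ fk I k - 1 := by
    calc (Pk.biUnion (hospAssignees M)).card
        ≤ ((Finset.univ.erase i).image (fun j => (Sum.inr ⟨k, j⟩ : S ⊕ Dummy I))).card :=
          Finset.card_le_card (Finset.biUnion_subset.mpr fun p hp => (hclone p hp).2)
      _ ≤ (Finset.univ.erase i).card := Finset.card_image_le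
      _ = fk I k - 1 := by simp
  have hfk : fk I k ≤ ∑ p ∈ Pk, I.cap p := Nat.sub_le _ _
  have hpos : 0 < fk I k := i.pos
  omega
end

section
/- Let I be an SPA-ST instance and I' the HRT instance obtained from I by the cloning construction. If M is a stable matching in I, then the matching M' in I' formed by taking M (viewing student-project pairs as resident-hospital pairs) together with a resident-complete assignment of all dummy residents to remaining hospital positions of their associated lecturer's hospitals is a stable matching in I', and |M'| = |M| + Σ_{l_k} max(0, (Σ_{p_r∈P_k} c_r) − d_k). -/
open scoped Classical
open Finset

variable {S P L : Type}

/-!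
A student keeps her project in `M'`, and a dummy resident already holds a first-choice
hospital, so only a student can take part in a blocking pair of `M'`, and it is then a blocking
pair of `M`. The one case needing an argument is a hospital with a free place whose lecturer `k`
is full in `M`: this cannot happen, because the hospitals of `k` then hold `d_k` students and
`f_k ≥ (Σ_{p ∈ P_k} c_p) − d_k` dummies, which already fills all of their places.
-/

section Counting

variable {A B H : Type} [Fintype A] [Fintype B]

lemma card_filter_univ_sum (p : A ⊕ B → Prop) [DecidablePred p] :
    #(univ.filter p) = #(univ.filter fun a => p (.inl a)) + #(univ.filter fun b => p (.inr b)) := by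
  simp only [card_filter, Fintype.sum_sum_type]

lemma msize_sum (M : A ⊕ B → Option H) : msize M = msize (M ∘ .inl) + msize (M ∘ .inr) :=
  card_filter_univ_sum _

lemma msize_eq_card_of_forall_isSome (M : A → Option H) (hM : ∀ a, (M a).isSome) :
    msize M = Fintype.card A := by
  simp [msize, hM]

lemma card_projAssignees_comp_inl_le (M : A ⊕ B → Option H) (h : H) :
    #(projAssignees (M ∘ .inl) h) ≤ #(hospAssignees M h) := by
  rw [hospAssignees, card_filter_univ_sum]
  exact Nat.le_add_right _ _

lemma card_filter_exists_mem_eq_sum (M : A → Option H) (F : Finset H) :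
    #(univ.filter fun a => ∃ h ∈ F, M a = some h) = ∑ h ∈ F, #(hospAssignees M h) := by
  rw [← card_biUnion]
  · congr 1
    ext a
    simp [hospAssignees]
  · intro h _ h' _ hne
    simp only [Function.onFun, disjoint_left, hospAssignees, mem_filter, mem_univ, true_and]
    intro a ha ha'
    exact hne (Option.some_injective _ (ha.symm.trans ha'))

end Counting

section Cloning

variable {S P L : Type} [Fintype P] [Fintype L]

lemma card_dummy_of_lec (I : SPAST S P L) (k : L) :
    #(univ.filter fun d : Dummy I => d.1 = k) = fk I k := by
  rw [card_filter, ← univ_sigma_univ, sum_sigma, sum_eq_single k] <;> simp_all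

lemma card_dummy (I : SPAST S P L) : Fintype.card (Dummy I) = ∑ k, fk I k := by
  simp [Fintype.card_sigma]

variable [Fintype S] (I : SPAST S P L) (M' : S ⊕ Dummy I → Option P)

lemma card_hospAssignees_eq_cap_of_lecFull
    (hdum : ∀ d : Dummy I, ∃ h, M' (.inr d) = some h ∧ I.lec h = d.1)
    (hcap : ∀ h, #(hospAssignees M' h) ≤ I.cap h)
    {h : P} (hfull : LecFull I (M' ∘ .inl) (I.lec h)) :
    #(hospAssignees M' h) = I.cap h := by
  set k := I.lec h
  set F := univ.filter fun p => I.lec p = k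
  have hcount : #(univ.filter fun r => ∃ p ∈ F, M' r = some p) = I.dcap k + fk I k := by
    rw [card_filter_univ_sum, ← hfull, ← card_dummy_of_lec I k]
    congr 2
    · ext s
      simp [lecAssignees, F, and_comm]
    · ext d
      obtain ⟨h', hh', hk'⟩ := hdum d
      simp [F, hh', hk']
  have hsum : ∑ p ∈ F, I.cap p ≤ ∑ p ∈ F, #(hospAssignees M' p) := by
    rw [← card_filter_exists_mem_eq_sum, hcount]
    exact le_add_tsub
  exact (sum_eq_sum_iff_of_le fun p _ => hcap p).1
    (le_antisymm (sum_le_sum fun p _ => hcap p) hsum) h (by simp [F, k])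

lemma not_hBlocks_clone_inl (hM : Stable I (M' ∘ .inl))
    (hdum : ∀ d : Dummy I, ∃ h, M' (.inr d) = some h ∧ I.lec h = d.1)
    (hcap : ∀ h, #(hospAssignees M' h) ≤ I.cap h) (s : S) (h : P) :
    ¬ HBlocks (clone I) M' (.inl s) h := by
  rintro ⟨hacc, hwants, hroom⟩
  refine hM.2 s h ⟨⟨hacc, hwants⟩, ?_⟩
  rcases hroom with hunder | ⟨s' | d, hs', hrank⟩
  · have hproj : ¬ ProjFull I (M' ∘ .inl) h := by
      have := card_projAssignees_comp_inl_le M' h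
      change _ < I.cap h at hunder
      unfold ProjFull
      omega
    exact .inl ⟨hproj, fun hfull =>
      hunder.ne (card_hospAssignees_eq_cap_of_lecFull I M' hdum hcap hfull)⟩
  · have hs' : M' (.inl s') = some h := by simpa [hospAssignees] using hs'
    have hrank : I.lRank (I.lec h) s < I.lRank (I.lec h) s' := by simpa [clone] using hrank
    by_cases hproj : ProjFull I (M' ∘ .inl) h
    · exact .inr (.inr ⟨hproj, s', by simpa [projAssignees] using hs', hrank⟩)
    by_cases hlec : LecFull I (M' ∘ .inl) (I.lec h)
    · exact .inr (.inl ⟨hproj, hlec, .inr ⟨s', mem_filter.2 ⟨mem_univ _, h, hs', rfl⟩, hrank⟩⟩)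
    · exact .inl ⟨hproj, hlec⟩
  · simp [clone] at hrank

lemma not_hBlocks_clone_inr (hassigned : ∀ d, (M' (.inr d)).isSome) (d : Dummy I) (h : P) :
    ¬ HBlocks (clone I) M' (.inr d) h := by
  rintro ⟨-, hnone | ⟨h', -, hrank⟩, -⟩
  · simpa [hnone] using hassigned d
  · simp [clone] at hrank

end Cloning

/-- Let `M` be a stable matching of the SPA-ST instance `I`, and
let `M'` be a matching of the cloned HRT instance that agrees with `M` on the
student-residents and assigns every dummy resident to some hospital of its
lecturer.  Then `M'` is stable in the cloned instance and
`|M'| = |M| + Σ_k max(0, (Σ_{p ∈ P_k} c_p) − d_k)`. -/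
theorem stmt2 [Fintype S] [Fintype P] [Fintype L] (I : SPAST S P L)
    (M : S → Option P) (hM : Stable I M)
    (M' : S ⊕ Dummy I → Option P)
    (hres : ∀ s, M' (Sum.inl s) = M s)
    (hdum : ∀ d : Dummy I, ∃ h, M' (Sum.inr d) = some h ∧ I.lec h = d.1)
    (hmatch : HIsMatching (clone I) M') :
    HStable (clone I) M' ∧ msize M' = msize M + ∑ k, fk I k := by
  obtain rfl : M = M' ∘ .inl := funext fun s => (hres s).symm
  have hassigned : ∀ d, (M' (.inr d)).isSome := fun d => by
    obtain ⟨h, hh, -⟩ := hdum d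
    simp [hh]
  refine ⟨⟨hmatch, ?_⟩, ?_⟩
  · rintro (s | d) h
    · exact not_hBlocks_clone_inl I M' hM hdum hmatch.2 s h
    · exact not_hBlocks_clone_inr I M' hassigned d h
  · rw [msize_sum M', msize_eq_card_of_forall_isSome (M' ∘ .inr) hassigned, card_dummy]
end

section
/- There exists an SPA-ST instance I and a stable matching M' in the HRT instance I' obtained from I by the cloning construction such that the matching M in I induced by M' (restricting M' to non-dummy residents and translating hospitals back to projects) is not stable in I. Concretely: take students s_1 with list p_1, p_2 and s_2 with list p_2, p_3; projects p_1, p_2 offered by l_1 and p_3 offered by l_2, all of capacity 1; lecturer preference lists l_1: s_2, s_1 and l_2: s_2; capacities d_1 = d_2 = 1. Then the HRT instance has a stable matching inducing M = {(s_1,p_1),(s_2,p_3)} in I, but M is blocked by (s_2,p_2). -/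
/-!
The dummy resident of `l₁` ranks `h₁` and `h₂` equally at the top, and both hospitals rank it
strictly above every student, so in the cloned instance it can hold `h₂` against `s₂`: then `s₂`
has no blocking hospital and `s₁` already has its first choice. Deleting the dummy leaves `p₂`
empty while `l₁` is full with `s₁`, whom `l₁` ranks below `s₂`, so `(s₂, p₂)` blocks the induced
matching in `I`.
-/

open scoped Classical
open Finset

variable {S P L : Type}

/-- The concrete SPA-ST instance of Statement 3: students `s₁ s₂` (indices `0,1`),
projects `p₁ p₂ p₃` (indices `0,1,2`), lecturers `l₁ l₂` (indices `0,1`).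
`s₁`: `p₁ p₂`; `s₂`: `p₂ p₃`; `p₁,p₂` offered by `l₁`, `p₃` by `l₂`; all project
capacities `1`; `l₁`: `s₂ s₁`, `l₂`: `s₂`; `d₁ = d₂ = 1`. -/
def I3 : SPAST (Fin 2) (Fin 3) (Fin 2) where
  lec := ![0, 0, 1]
  cap := ![1, 1, 1]
  dcap := ![1, 1]
  acc := fun s p => if s = 0 then (p = 0 ∨ p = 1) else (p = 1 ∨ p = 2)
  sRank := fun s p =>
    if s = 0 then (if p = 0 then 0 else 1) else (if p = 1 then 0 else 1)
  lRank := fun _ s => if s = 1 then 0 else 1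

/-- the stable matching `M' = {(r₁,h₁), (r₂,h₃), (r₃,h₂)}` of the cloned HRT
instance (`r₃` is the dummy resident of `l₁`) -/
def M3' : Fin 2 ⊕ Dummy I3 → Option (Fin 3) := fun r =>
  match r with
  | Sum.inl s => if s = 0 then some 0 else some 2
  | Sum.inr _ => some 1

/-- the induced matching `M = {(s₁,p₁), (s₂,p₃)}` in the SPA-ST instance -/
def M3 : Fin 2 → Option (Fin 3) := fun s => if s = 0 then some 0 else some 2

section HRT

variable {R H : Type} [Fintype R] {J : HRT R H} {M : R → Option H} {r : R} {h : H}

theorem not_hBlocks_of_rRank_le {h' : H} (hr : M r = some h')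
    (hle : J.rRank r h' ≤ J.rRank r h) : ¬ HBlocks J M r h := by
  rintro ⟨-, hnone | ⟨h'', hr', hlt⟩, -⟩
  · simp [hr] at hnone
  · rw [hr, Option.some_inj] at hr'
    subst hr'
    omega

theorem not_hBlocks_of_full_of_hRank_eq_zero (hfull : J.cap h ≤ (hospAssignees M h).card)
    (hzero : ∀ r' ∈ hospAssignees M h, J.hRank h r' = 0) : ¬ HBlocks J M r h := by
  rintro ⟨-, -, hlt | ⟨r', hr', hrank⟩⟩
  · omega
  · rw [hzero r' hr'] at hrank
    omega

end HRT

theorem card_hospAssignees_sum {A B H : Type} [Fintype A] [Fintype B] (M : A ⊕ B → Option H)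
    (h : H) : (hospAssignees M h).card =
      (hospAssignees (M ∘ Sum.inl) h).card + (hospAssignees (M ∘ Sum.inr) h).card := by
  simp only [hospAssignees, Finset.card_filter, Fintype.sum_sum_type, Function.comp_apply]

section Clone

variable [Fintype S] [Fintype P] [Fintype L] {I : SPAST S P L} {M : S ⊕ Dummy I → Option P}
  {p : P}

theorem not_hBlocks_clone_dummy {d : Dummy I} (hd : M (Sum.inr d) ≠ none) :
    ¬ HBlocks (clone I) M (Sum.inr d) p := by
  obtain ⟨p', hp'⟩ := Option.ne_none_iff_exists'.mp hd
  exact not_hBlocks_of_rRank_le hp' le_rfl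

theorem not_hBlocks_clone_of_full_of_dummies {r : S ⊕ Dummy I}
    (hfull : I.cap p ≤ (hospAssignees M p).card)
    (hdummies : ∀ r' ∈ hospAssignees M p, r'.isRight) : ¬ HBlocks (clone I) M r p := by
  refine not_hBlocks_of_full_of_hRank_eq_zero hfull fun r' hr' => ?_
  rcases r' with s | d
  · simpa using hdummies _ hr'
  · rfl

end Clone

theorem fk_I3_zero : fk I3 0 = 1 := by
  simp only [fk, Finset.sum_filter, Fin.sum_univ_three]
  simp [I3]

theorem fk_I3_one : fk I3 1 = 0 := by
  simp only [fk, Finset.sum_filter, Fin.sum_univ_three]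
  simp [I3]

theorem card_dummy_I3 : Fintype.card (Dummy I3) = 1 := by
  simp [Fintype.card_sigma, Fin.sum_univ_two, fk_I3_zero, fk_I3_one]

theorem dummy_I3_fst (d : Dummy I3) : d.1 = 0 := by
  obtain ⟨k, i⟩ := d
  fin_cases k
  · rfl
  · have := i.isLt
    simp [fk_I3_one] at this

theorem card_projAssignees_M3 (p : Fin 3) :
    (projAssignees M3 p).card = if p = 1 then 0 else 1 := by
  rw [projAssignees, Finset.card_filter, Fin.sum_univ_two]
  fin_cases p <;> simp [M3]

theorem card_hospAssignees_M3' (p : Fin 3) : (hospAssignees M3' p).card = 1 := by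
  rw [card_hospAssignees_sum]
  have hstudents : hospAssignees (M3' ∘ Sum.inl) p = projAssignees M3 p := rfl
  have hdummies : (hospAssignees (M3' ∘ Sum.inr) p).card = if p = 1 then 1 else 0 := by
    by_cases hp : p = 1
    · rw [if_pos hp, ← card_dummy_I3, ← Finset.card_univ]
      congr 1
      ext
      simp [hospAssignees, M3', hp]
    · rw [if_neg hp, Finset.card_eq_zero]
      ext
      simp [hospAssignees, M3', Ne.symm hp]
  rw [hstudents, card_projAssignees_M3, hdummies]
  split_ifs <;> rfl

theorem hIsMatching_M3' : HIsMatching (clone I3) M3' := by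
  refine ⟨?_, fun p => (card_hospAssignees_M3' p).trans_le (by fin_cases p <;> rfl)⟩
  rintro (s | d) p hp
  · fin_cases s <;> simp [M3'] at hp <;> subst hp <;> simp [clone, I3]
  · simp only [M3', Option.some_inj] at hp
    subst hp
    exact (dummy_I3_fst d).symm

theorem not_hBlocks_M3' (r : Fin 2 ⊕ Dummy I3) (p : Fin 3) : ¬ HBlocks (clone I3) M3' r p := by
  rcases r with s | d
  · by_cases hp : p = 1
    · subst hp
      refine not_hBlocks_clone_of_full_of_dummies (card_hospAssignees_M3' 1).ge ?_
      rintro (s | d) hs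
      · simp only [hospAssignees, Finset.mem_filter, Finset.mem_univ, true_and] at hs
        fin_cases s <;> simp [M3'] at hs
      · rfl
    · fin_cases s
      · exact not_hBlocks_of_rRank_le (h' := 0) rfl (Nat.zero_le _)
      · exact not_hBlocks_of_rRank_le (h' := 2) rfl (by simp [clone, I3, hp])
  · exact not_hBlocks_clone_dummy (Option.some_ne_none 1)

theorem lecAssignees_I3_M3 (k : Fin 2) : lecAssignees I3 M3 k = {k} := by
  ext s
  simp only [lecAssignees, Finset.mem_filter, Finset.mem_univ, true_and, Finset.mem_singleton]
  fin_cases k <;> fin_cases s <;> simp [M3, I3]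

theorem isMatching_M3 : IsMatching I3 M3 := by
  refine ⟨?_, fun p => ?_, fun k => ?_⟩
  · intro s p hp
    fin_cases s <;> simp [M3] at hp <;> subst hp <;> simp [I3]
  · rw [card_projAssignees_M3]
    fin_cases p <;> simp [I3]
  · rw [lecAssignees_I3_M3, Finset.card_singleton]
    fin_cases k <;> rfl

theorem blocks_M3 : Blocks I3 M3 1 1 := by
  have hlec : I3.lec 1 = 0 := rfl
  refine ⟨⟨by simp [I3], Or.inr ⟨2, rfl, by simp [I3]⟩⟩,
    Or.inr (Or.inl ⟨?_, ?_, Or.inr ⟨0, ?_, by simp [I3]⟩⟩)⟩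
  · simp [ProjFull, card_projAssignees_M3, I3]
  · rw [LecFull, hlec, lecAssignees_I3_M3, Finset.card_singleton]
    rfl
  · simp [hlec, lecAssignees_I3_M3]

/-- The converse of the cloning correspondence fails: in the
instance `I3`, the matching `M3'` is stable in the cloned HRT instance and
induces `M3` on the students, yet `M3` is a matching of `I3` that is blocked by
`(s₂, p₂)` and hence is not stable in `I3`. -/
theorem stmt3 :
    HStable (clone I3) M3' ∧
    (∀ s, M3' (Sum.inl s) = M3 s) ∧
    IsMatching I3 M3 ∧
    Blocks I3 M3 1 1 ∧
    ¬ Stable I3 M3 :=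
  ⟨⟨hIsMatching_M3', not_hBlocks_M3'⟩, fun _ => rfl, isMatching_M3, blocks_M3,
    fun hstable => hstable.2 1 1 blocks_M3⟩
end

section
/- Let I be an SPA-ST instance and M a matching in I. Define, for student s_i and project p_j offered by l_k: γ_{ij} = 1 if s_i is unassigned or strictly prefers p_j to M(s_i) (and p_j is acceptable to s_i), else 0; α_{ij} = 1 iff s_i ∉ M(l_k), l_k is full, and l_k weakly prefers its worst assignee in M(l_k) to s_i; β_{ij} = 1 iff s_i ∉ M(p_j), p_j is full, and l_k weakly prefers its worst assignee in M(p_j) to s_i. Then M is stable if and only if for all acceptable pairs (s_i, p_j), γ_{ij} ≤ α_{ij} + β_{ij}. -/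
open scoped Classical
open Finset

variable {S P L : Type}

/-! A pair with `γ = 1` blocks `M` exactly when neither `α` nor `β` holds. Such a student is
never an assignee of `p_j`, so `β` fails precisely when `p_j` is undersubscribed or its lecturer
strictly prefers `s_i` to an assignee of `p_j` (blocking condition (iii), which also refutes `α`,
as assignees of `p_j` are assignees of `l_k`); when `p_j` is undersubscribed, `α` fails precisely
in blocking conditions (i) and (ii). -/

lemma ite_one_zero_le_add_iff (a b c : Prop) [Decidable a] [Decidable b] [Decidable c] :
    (if a then 1 else 0 : ℕ) ≤ (if b then 1 else 0) + (if c then 1 else 0) ↔ (a → b ∨ c) := by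
  by_cases a <;> by_cases b <;> by_cases c <;> simp [*]

section Blocking

variable [Fintype S] (I : SPAST S P L) (M : S → Option P)

/-- The condition `α_{ij} = 1` of the IP formulation. -/
def LecFullAgainst (s : S) (p : P) : Prop :=
  s ∉ lecAssignees I M (I.lec p) ∧ LecFull I M (I.lec p) ∧
    ∀ s' ∈ lecAssignees I M (I.lec p), I.lRank (I.lec p) s' ≤ I.lRank (I.lec p) s

/-- The condition `β_{ij} = 1` of the IP formulation. -/
def ProjFullAgainst (s : S) (p : P) : Prop :=
  s ∉ projAssignees M p ∧ ProjFull I M p ∧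
    ∀ s' ∈ projAssignees M p, I.lRank (I.lec p) s' ≤ I.lRank (I.lec p) s

variable {M}

lemma mem_lecAssignees_of_mem_projAssignees {s : S} {p : P} (h : s ∈ projAssignees M p) :
    s ∈ lecAssignees I M (I.lec p) := by
  simp only [projAssignees, lecAssignees, mem_filter, mem_univ, true_and] at h ⊢
  exact ⟨p, h, rfl⟩

lemma not_mem_projAssignees_of_wantsToMove {s : S} {p : P} (hw : WantsToMove I M s p) :
    s ∉ projAssignees M p := by
  simp only [projAssignees, mem_filter, mem_univ, true_and]
  intro hs
  rcases hw.2 with hnone | ⟨p', hp', hlt⟩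
  · simp [hs] at hnone
  · obtain rfl : p = p' := Option.some_injective _ (hs.symm.trans hp')
    exact lt_irrefl _ hlt

lemma blocks_iff {s : S} {p : P} :
    Blocks I M s p ↔
      WantsToMove I M s p ∧ ¬ LecFullAgainst I M s p ∧ ¬ ProjFullAgainst I M s p := by
  refine and_congr_right fun hw => ?_
  have hs := not_mem_projAssignees_of_wantsToMove I hw
  simp only [LecFullAgainst, ProjFullAgainst, hs, not_false_eq_true, true_and, not_and,
    not_forall, not_le, exists_prop]
  by_cases hpf : ProjFull I M p
  · constructor
    · rintro (⟨hnpf, -⟩ | ⟨hnpf, -⟩ | ⟨-, s', hs', hlt⟩)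
      · exact absurd hpf hnpf
      · exact absurd hpf hnpf
      · exact ⟨fun _ _ => ⟨s', mem_lecAssignees_of_mem_projAssignees I hs', hlt⟩,
          fun _ => ⟨s', hs', hlt⟩⟩
    · rintro ⟨-, hproj⟩
      exact Or.inr (Or.inr ⟨hpf, hproj hpf⟩)
  · by_cases hlf : LecFull I M (I.lec p)
    · simp only [hpf, hlf, not_false_eq_true, true_and, false_and, or_false,
        IsEmpty.forall_iff, and_true, forall_const]
      by_cases hsl : s ∈ lecAssignees I M (I.lec p) <;> simp [hsl]
    · simp [hpf, hlf]

end Blocking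

/-- With the 0/1 indicators `γ`, `α`, `β` defined as in the IP
formulation, a matching `M` is stable iff `γ_{ij} ≤ α_{ij} + β_{ij}` for all
acceptable pairs `(s_i, p_j)`. -/
theorem stmt6 [Fintype S] (I : SPAST S P L) (M : S → Option P) (hM : IsMatching I M)
    (γ α β : S → P → ℕ)
    (hγ : ∀ s p, γ s p = if WantsToMove I M s p then 1 else 0)
    (hα : ∀ s p, α s p =
      if (s ∉ lecAssignees I M (I.lec p) ∧ LecFull I M (I.lec p) ∧
          ∀ s' ∈ lecAssignees I M (I.lec p),
            I.lRank (I.lec p) s' ≤ I.lRank (I.lec p) s) then 1 else 0)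
    (hβ : ∀ s p, β s p =
      if (s ∉ projAssignees M p ∧ ProjFull I M p ∧
          ∀ s' ∈ projAssignees M p,
            I.lRank (I.lec p) s' ≤ I.lRank (I.lec p) s) then 1 else 0) :
    Stable I M ↔ ∀ s p, I.acc s p → γ s p ≤ α s p + β s p := by
  have key : ∀ s p, γ s p ≤ α s p + β s p ↔ ¬ Blocks I M s p := fun s p => by
    rw [hγ, hα, hβ, ite_one_zero_le_add_iff, blocks_iff]
    unfold LecFullAgainst ProjFullAgainst
    tauto
  simp only [key]
  exact ⟨fun hst s p _ => hst.2 s p,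
    fun h => ⟨hM, fun s p hb => h s p hb.1.1 hb⟩⟩
end

section
/- Let I be an SPA-ST instance and J the IP model defined by constraints (1)–(7) with objective maximize Σ_{i,j} x_{ij}. Then the optimal objective value of J equals the cardinality of a maximum stable matching in I, and optimal solutions of J correspond exactly to maximum stable matchings of I. -/
open scoped Classical
open Finset

variable {S P L : Type}

/-- Feasibility of `(x, a, b)` in the IP model `J` for MAX-SPA-ST: all variables
are binary, unacceptable pairs are forced to `0` (constraint 1), each student is
assigned at most once (2), project and lecturer capacities hold (3)–(4), and the
stability constraints (5)–(7) hold, where `S_{ij}` is the set of projects ranked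
by `s_i` at least as highly as `p_j`, `T_{ik}` the set of students other than
`s_i` ranked by `l_k` at least as highly as `s_i`, and `T_{ijk}` its subset of
students finding `p_j` acceptable. -/
def Feasible [Fintype S] [Fintype P] (I : SPAST S P L) (x a b : S → P → ℤ) : Prop :=
  (∀ s p, x s p = 0 ∨ x s p = 1) ∧
  (∀ s p, a s p = 0 ∨ a s p = 1) ∧
  (∀ s p, b s p = 0 ∨ b s p = 1) ∧
  -- (1)
  (∀ s p, ¬ I.acc s p → x s p = 0) ∧
  -- (2)
  (∀ s, ∑ p, x s p ≤ 1) ∧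
  -- (3)
  (∀ p, ∑ s, x s p ≤ (I.cap p : ℤ)) ∧
  -- (4)
  (∀ k, ∑ s, ∑ p ∈ Finset.univ.filter (fun p => I.lec p = k), x s p ≤ (I.dcap k : ℤ)) ∧
  -- (5)
  (∀ s p, I.acc s p →
    1 - ∑ r ∈ Finset.univ.filter (fun r => I.acc s r ∧ I.sRank s r ≤ I.sRank s p), x s r
      ≤ a s p + b s p) ∧
  -- (6)
  (∀ s p, I.acc s p →
    ∑ u ∈ Finset.univ.filter
        (fun u => I.lRank (I.lec p) u ≤ I.lRank (I.lec p) s ∧ u ≠ s),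
      ∑ r ∈ Finset.univ.filter (fun r => I.lec r = I.lec p), x u r
      ≥ (I.dcap (I.lec p) : ℤ) * a s p) ∧
  -- (7)
  (∀ s p, I.acc s p →
    ∑ u ∈ Finset.univ.filter
        (fun u => I.lRank (I.lec p) u ≤ I.lRank (I.lec p) s ∧ u ≠ s ∧ I.acc u p),
      x u p ≥ (I.cap p : ℤ) * b s p)


/-! A 0/1 vector `x` with row sums at most one is the indicator `x_{ij} = [M(s_i) = p_j]` of an
assignment `M`, and in terms of `M` the sums occurring in (2)–(7) count assigned students.
Constraints (5)–(7) then say exactly that for every pair `(s_i, p_j)` that `s_i` would move to,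
either `l_k` is full with students it ranks at least as high as `s_i` (`α_{ij} = 1`) or `p_j` is
full with such students (`β_{ij} = 1`), which is the negation of the three blocking conditions.
Hence feasible solutions and stable matchings correspond with equal objective value and size. -/

lemma Finset.card_eq_and_forall_of_le_card_filter {α : Type*} {A : Finset α} {q : α → Prop}
    [DecidablePred q] {n : ℕ} (hA : #A ≤ n) (h : n ≤ #(A.filter q)) : #A = n ∧ ∀ a ∈ A, q a := by
  have hle := card_filter_le A q
  exact ⟨by omega, card_filter_eq_iff.mp (by omega)⟩

noncomputable def assignIndicator (M : S → Option P) (s : S) (p : P) : ℤ :=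
  if M s = some p then 1 else 0

lemma eq_assignIndicator_of_iff {x : S → P → ℤ} {M : S → Option P}
    (hx : ∀ s p, x s p = 0 ∨ x s p = 1) (hM : ∀ s p, M s = some p ↔ x s p = 1) :
    x = assignIndicator M := by
  funext s p
  rcases hx s p with h | h <;> simp [assignIndicator, hM, h]

lemma exists_eq_assignIndicator [Fintype P] {x : S → P → ℤ}
    (hx : ∀ s p, x s p = 0 ∨ x s p = 1) (hrow : ∀ s, ∑ p, x s p ≤ 1) :
    ∃ M : S → Option P, x = assignIndicator M := by
  have hunique : ∀ s p q, x s p = 1 → x s q = 1 → p = q := by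
    intro s p q hp hq
    by_contra hne
    have hpair : ∑ r ∈ {p, q}, x s r ≤ ∑ r, x s r := sum_le_sum_of_subset_of_nonneg (subset_univ {p, q}) fun r _ _ => by
      rcases hx s r with h | h <;> simp [h]
    rw [sum_pair hne, hp, hq] at hpair
    linarith [hrow s]
  refine ⟨fun s => if h : ∃ p, x s p = 1 then some h.choose else none,
    eq_assignIndicator_of_iff hx fun s p => ?_⟩
  split_ifs with h
  · exact ⟨fun hp => Option.some_injective _ hp ▸ h.choose_spec,
      fun hp => congrArg some (hunique s _ _ h.choose_spec hp)⟩
  · simpa using fun hp => h ⟨p, hp⟩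

lemma sum_assignIndicator_row (M : S → Option P) (s : S) (R : Finset P) :
    ∑ r ∈ R, assignIndicator M s r = if ∃ r ∈ R, M s = some r then 1 else 0 := by
  cases h : M s <;> simp [assignIndicator, h]

section Counting

variable [Fintype S]

lemma sum_assignIndicator_col (M : S → Option P) (p : P) (T : Finset S) :
    ∑ u ∈ T, assignIndicator M u p = (#{u ∈ projAssignees M p | u ∈ T} : ℤ) := by
  simp only [assignIndicator, sum_boole]
  congr 2
  ext u
  simp [projAssignees, and_comm]

lemma sum_assignIndicator_lec [Fintype P] (I : SPAST S P L) (M : S → Option P) (k : L) (T : Finset S) :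
    ∑ u ∈ T, ∑ r ∈ Finset.univ.filter (fun r => I.lec r = k), assignIndicator M u r
      = (#{u ∈ lecAssignees I M k | u ∈ T} : ℤ) := by
  simp only [sum_assignIndicator_row, sum_boole]
  congr 2
  ext u
  simp [lecAssignees, and_comm]

lemma sum_sum_assignIndicator [Fintype P] (M : S → Option P) :
    ∑ s, ∑ p, assignIndicator M s p = msize M := by
  simp [sum_assignIndicator_row, msize, Option.isSome_iff_exists]

lemma projAssignees_subset_lecAssignees (I : SPAST S P L) (M : S → Option P) (p : P) :
    projAssignees M p ⊆ lecAssignees I M (I.lec p) := by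
  intro u hu
  simp only [projAssignees, lecAssignees, mem_filter, mem_univ, true_and] at hu ⊢
  exact ⟨p, hu, rfl⟩

end Counting

lemma wantsToMove_iff {I : SPAST S P L} {M : S → Option P} {s : S} {p : P} (hacc : I.acc s p) :
    WantsToMove I M s p ↔ ∀ r, M s = some r → I.sRank s p < I.sRank s r := by
  cases h : M s <;> simp [WantsToMove, hacc, h]

section FeasibleToStable

variable [Fintype S] [Fintype P] {I : SPAST S P L} {M : S → Option P} {a b : S → P → ℤ}

lemma isMatching_of_feasible (hF : Feasible I (assignIndicator M) a b) : IsMatching I M := by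
  obtain ⟨-, -, -, hacc, -, hcap, hdcap, -⟩ := hF
  refine ⟨fun s p hp => ?_, fun p => ?_, fun k => ?_⟩
  · by_contra h
    simpa [assignIndicator, hp] using hacc s p h
  · simpa [sum_assignIndicator_col] using hcap p
  · simpa [sum_assignIndicator_lec] using hdcap k

lemma lecFull_of_feasible (hF : Feasible I (assignIndicator M) a b) {s : S} {p : P}
    (hacc : I.acc s p) (ha : a s p = 1) :
    LecFull I M (I.lec p) ∧ ∀ u ∈ lecAssignees I M (I.lec p),
      I.lRank (I.lec p) u ≤ I.lRank (I.lec p) s ∧ u ≠ s := by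
  have h6 := hF.2.2.2.2.2.2.2.2.1 s p hacc
  rw [ha, mul_one, ge_iff_le, sum_assignIndicator_lec] at h6
  obtain ⟨hfull, hall⟩ := card_eq_and_forall_of_le_card_filter
    ((isMatching_of_feasible hF).2.2 _) (by exact_mod_cast h6)
  exact ⟨hfull, fun u hu => (mem_filter.mp (hall u hu)).2⟩

lemma projFull_of_feasible (hF : Feasible I (assignIndicator M) a b) {s : S} {p : P}
    (hacc : I.acc s p) (hb : b s p = 1) :
    ProjFull I M p ∧ ∀ u ∈ projAssignees M p, I.lRank (I.lec p) u ≤ I.lRank (I.lec p) s := by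
  have h7 := hF.2.2.2.2.2.2.2.2.2 s p hacc
  rw [hb, mul_one, ge_iff_le, sum_assignIndicator_col] at h7
  obtain ⟨hfull, hall⟩ := card_eq_and_forall_of_le_card_filter
    ((isMatching_of_feasible hF).2.1 p) (by exact_mod_cast h7)
  exact ⟨hfull, fun u hu => (mem_filter.mp (hall u hu)).2.1⟩

lemma alpha_or_beta_of_feasible (hF : Feasible I (assignIndicator M) a b) {s : S} {p : P}
    (hwant : WantsToMove I M s p) : a s p = 1 ∨ b s p = 1 := by
  obtain ⟨-, ha, hb, -, -, -, -, h5, -⟩ := hF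
  have hnone : ¬ ∃ r ∈ Finset.univ.filter (fun r => I.acc s r ∧ I.sRank s r ≤ I.sRank s p),
      M s = some r := by
    rintro ⟨r, hr, hMr⟩
    exact (mem_filter.mp hr).2.2.not_gt ((wantsToMove_iff hwant.1).mp hwant r hMr)
  have h5 := h5 s p hwant.1
  rw [sum_assignIndicator_row, if_neg hnone] at h5
  rcases ha s p with h | h <;> rcases hb s p with h' | h' <;> omega

lemma not_blocks_of_feasible (hF : Feasible I (assignIndicator M) a b) (s : S) (p : P) :
    ¬ Blocks I M s p := by
  rintro ⟨hwant, hblock⟩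
  rcases alpha_or_beta_of_feasible hF hwant with ha | hb
  · obtain ⟨hfull, hall⟩ := lecFull_of_feasible hF hwant.1 ha
    rcases hblock with ⟨-, hnfull⟩ | ⟨-, -, hs | ⟨u, hu, hlt⟩⟩ | ⟨-, u, hu, hlt⟩
    · exact hnfull hfull
    · exact (hall s hs).2 rfl
    · exact (hall u hu).1.not_gt hlt
    · exact (hall u (projAssignees_subset_lecAssignees I M p hu)).1.not_gt hlt
  · obtain ⟨hfull, hall⟩ := projFull_of_feasible hF hwant.1 hb
    rcases hblock with ⟨hnfull, -⟩ | ⟨hnfull, -⟩ | ⟨-, u, hu, hlt⟩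
    · exact hnfull hfull
    · exact hnfull hfull
    · exact (hall u hu).not_gt hlt

lemma stable_of_feasible (hF : Feasible I (assignIndicator M) a b) : Stable I M :=
  ⟨isMatching_of_feasible hF, not_blocks_of_feasible hF⟩

end FeasibleToStable

section StableToFeasible

variable [Fintype S] {I : SPAST S P L} {M : S → Option P}

/-- `α_{ij} = 1` when `s_i` would move to `p_j` although `p_j` has room (stability then forces
`l_k` to be full with students it ranks at least as high as `s_i`); `β_{ij} = 1` when `s_i` would
move to `p_j` and `p_j` is full. -/
noncomputable def stabilityAlpha (I : SPAST S P L) (M : S → Option P) (s : S) (p : P) : ℤ :=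
  if WantsToMove I M s p ∧ ¬ ProjFull I M p then 1 else 0

noncomputable def stabilityBeta (I : SPAST S P L) (M : S → Option P) (s : S) (p : P) : ℤ :=
  if WantsToMove I M s p ∧ ProjFull I M p then 1 else 0

lemma feasible_constraint5_of_isMatching [Fintype P] (hM : IsMatching I M) (s : S) (p : P)
    (hacc : I.acc s p) :
    1 - ∑ r ∈ Finset.univ.filter (fun r => I.acc s r ∧ I.sRank s r ≤ I.sRank s p),
        assignIndicator M s r
      ≤ stabilityAlpha I M s p + stabilityBeta I M s p := by
  rw [sum_assignIndicator_row]
  by_cases hwant : WantsToMove I M s p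
  · by_cases hfull : ProjFull I M p <;> split_ifs <;>
      simp [stabilityAlpha, stabilityBeta, hwant, hfull]
  · obtain ⟨r, hMr, hle⟩ : ∃ r, M s = some r ∧ I.sRank s r ≤ I.sRank s p := by
      simpa [wantsToMove_iff hacc] using hwant
    rw [if_pos ⟨r, mem_filter.mpr ⟨mem_univ r, hM.1 s r hMr, hle⟩, hMr⟩]
    simp [stabilityAlpha, stabilityBeta, hwant]

lemma feasible_constraint6_of_stable [Fintype P] (hS : Stable I M) (s : S) (p : P) :
    ∑ u ∈ Finset.univ.filter (fun u => I.lRank (I.lec p) u ≤ I.lRank (I.lec p) s ∧ u ≠ s),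
        ∑ r ∈ Finset.univ.filter (fun r => I.lec r = I.lec p), assignIndicator M u r
      ≥ (I.dcap (I.lec p) : ℤ) * stabilityAlpha I M s p := by
  rw [sum_assignIndicator_lec, stabilityAlpha]
  split_ifs with h
  · obtain ⟨hwant, hnfull⟩ := h
    have hnb := hS.2 s p
    have hfull : LecFull I M (I.lec p) := by
      by_contra hf
      exact hnb ⟨hwant, Or.inl ⟨hnfull, hf⟩⟩
    have hbetter : ∀ u ∈ lecAssignees I M (I.lec p),
        u ∈ Finset.univ.filter (fun u => I.lRank (I.lec p) u ≤ I.lRank (I.lec p) s ∧ u ≠ s) := by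
      intro u hu
      refine mem_filter.mpr ⟨mem_univ u, not_lt.mp fun hlt => ?_, ?_⟩
      · exact hnb ⟨hwant, Or.inr (Or.inl ⟨hnfull, hfull, Or.inr ⟨u, hu, hlt⟩⟩)⟩
      · rintro rfl
        exact hnb ⟨hwant, Or.inr (Or.inl ⟨hnfull, hfull, Or.inl hu⟩)⟩
    rw [filter_true_of_mem hbetter, mul_one, hfull]
  · simp

lemma feasible_constraint7_of_stable (hS : Stable I M) (s : S) (p : P) :
    ∑ u ∈ Finset.univ.filter
        (fun u => I.lRank (I.lec p) u ≤ I.lRank (I.lec p) s ∧ u ≠ s ∧ I.acc u p),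
        assignIndicator M u p
      ≥ (I.cap p : ℤ) * stabilityBeta I M s p := by
  rw [sum_assignIndicator_col, stabilityBeta]
  split_ifs with h
  · obtain ⟨hwant, hfull⟩ := h
    have hbetter : ∀ u ∈ projAssignees M p, u ∈ Finset.univ.filter
        (fun u => I.lRank (I.lec p) u ≤ I.lRank (I.lec p) s ∧ u ≠ s ∧ I.acc u p) := by
      intro u hu
      have hMu : M u = some p := (mem_filter.mp hu).2
      refine mem_filter.mpr ⟨mem_univ u, not_lt.mp fun hlt => ?_, ?_, hS.1.1 u p hMu⟩
      · exact hS.2 s p ⟨hwant, Or.inr (Or.inr ⟨hfull, u, hu, hlt⟩)⟩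
      · rintro rfl
        exact lt_irrefl _ ((wantsToMove_iff hwant.1).mp hwant p hMu)
    rw [filter_true_of_mem hbetter, mul_one, hfull]
  · simp

lemma feasible_of_stable [Fintype P] (hS : Stable I M) :
    Feasible I (assignIndicator M) (stabilityAlpha I M) (stabilityBeta I M) := by
  refine ⟨fun s p => ?_, fun s p => ?_, fun s p => ?_, fun s p hnacc => ?_, fun s => ?_,
    fun p => ?_, fun k => ?_, fun s p h => feasible_constraint5_of_isMatching hS.1 s p h,
    fun s p _ => feasible_constraint6_of_stable hS s p,
    fun s p _ => feasible_constraint7_of_stable hS s p⟩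
  · unfold assignIndicator; split_ifs <;> simp
  · unfold stabilityAlpha; split_ifs <;> simp
  · unfold stabilityBeta; split_ifs <;> simp
  · simpa [assignIndicator] using mt (hS.1.1 s p) hnacc
  · rw [sum_assignIndicator_row]; split_ifs <;> simp
  · simpa [sum_assignIndicator_col] using hS.1.2.1 p
  · simpa [sum_assignIndicator_lec] using hS.1.2.2 k

end StableToFeasible

lemma feasibleValues_eq_stableSizes [Fintype S] [Fintype P] (I : SPAST S P L) :
    {m : ℤ | ∃ x a b, Feasible I x a b ∧ ∑ s, ∑ p, x s p = m}
      = {m : ℤ | ∃ M : S → Option P, Stable I M ∧ (msize M : ℤ) = m} := by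
  ext m
  constructor
  · rintro ⟨x, a, b, hF, rfl⟩
    obtain ⟨M, rfl⟩ := exists_eq_assignIndicator hF.1 hF.2.2.2.2.1
    exact ⟨M, stable_of_feasible hF, (sum_sum_assignIndicator M).symm⟩
  · rintro ⟨M, hS, rfl⟩
    exact ⟨_, _, _, feasible_of_stable hS, sum_sum_assignIndicator M⟩

/-- The optimal objective value of the IP model `J` (maximising
`Σ_{i,j} x_{ij}`) equals the cardinality of a maximum stable matching of `I`,
and optimal solutions of `J` correspond exactly to maximum stable matchings. -/
theorem stmt8 [Fintype S] [Fintype P] (I : SPAST S P L) :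
    (∀ n : ℤ,
      IsGreatest {m : ℤ | ∃ x a b, Feasible I x a b ∧ ∑ s, ∑ p, x s p = m} n ↔
      IsGreatest {m : ℤ | ∃ M : S → Option P, Stable I M ∧ (msize M : ℤ) = m} n) ∧
    (∀ (x a b : S → P → ℤ) (M : S → Option P),
      Feasible I x a b → (∀ s p, M s = some p ↔ x s p = 1) →
      (IsGreatest {m : ℤ | ∃ x' a' b', Feasible I x' a' b' ∧ ∑ s, ∑ p, x' s p = m}
          (∑ s, ∑ p, x s p) ↔
        (Stable I M ∧ ∀ N : S → Option P, Stable I N → msize N ≤ msize M))) := by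
  refine ⟨fun n => by rw [feasibleValues_eq_stableSizes], fun x a b M hF hM => ?_⟩
  obtain rfl := eq_assignIndicator_of_iff hF.1 hM
  have hS := stable_of_feasible hF
  rw [feasibleValues_eq_stableSizes, sum_sum_assignIndicator]
  constructor
  · rintro ⟨-, hmax⟩
    exact ⟨hS, fun N hN => by exact_mod_cast hmax ⟨N, hN, rfl⟩⟩
  · rintro ⟨-, hmax⟩
    refine ⟨⟨M, hS, rfl⟩, ?_⟩
    rintro _ ⟨N, hN, rfl⟩
    exact_mod_cast hmax N hN
end

section
/- Let G be a bipartite multigraph whose edge set is the disjoint union of two matchings A and B. Suppose that no connected component of G is a single B-edge (a path of length 1 with its unique edge in B), and no component is a path of length 3 whose two end edges are in B (i.e., pattern B–A–B). Then |A| ≥ (2/3)·|B|. -/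
open SimpleGraph

/-- a graph in which every vertex has at most one neighbour, i.e. whose edge set
is a matching -/
def GraphMatching {V : Type} (A : SimpleGraph V) : Prop :=
  ∀ ⦃u v w⦄, A.Adj u v → A.Adj u w → v = w

/-!
Count `B`-darts `(u, v)` instead of `B`-edges. A dart whose tail `u` is covered by `A` is sent to
the `A`-dart leaving `u`; this is injective because `B` is a matching, so these darts number at
most `2|A|`. A dart whose tail is not covered by `A` has its head `v` covered, and is sent to the
`A`-edge at `v`. Two such darts can only collide along a `B–A–B` path whose ends are both
uncovered by `A`, which the hypothesis excludes; so these darts number at most `|A|`. Hence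
`2|B| ≤ 3|A|`.
-/

namespace SimpleGraph

variable {V : Type}

lemma ncard_setOf_adj [Fintype V] (G : SimpleGraph V) :
    {p : V × V | G.Adj p.1 p.2}.ncard = 2 * G.edgeSet.ncard := by
  classical
  let e : {p : V × V | G.Adj p.1 p.2} ≃ G.Dart :=
    ⟨fun p => ⟨p.1, p.2⟩, fun d => ⟨d.toProd, d.adj⟩, fun _ => rfl, fun _ => rfl⟩
  rw [← Nat.card_coe_set_eq, Nat.card_congr e, Nat.card_eq_fintype_card,
    dart_card_eq_twice_card_edges, ← Set.ncard_coe_finset, coe_edgeFinset]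

open scoped Classical in
noncomputable def someNeighbor (G : SimpleGraph V) (v : V) : V :=
  if h : ∃ w, G.Adj v w then h.choose else v

lemma adj_someNeighbor {G : SimpleGraph V} {v : V} (hv : v ∈ G.support) :
    G.Adj v (G.someNeighbor v) := by
  rw [mem_support] at hv
  rw [someNeighbor, dif_pos hv]
  exact hv.choose_spec

variable [Finite V] {A B : SimpleGraph V}

lemma ncard_darts_tail_mem_support_le (hB : GraphMatching B) :
    {p : V × V | B.Adj p.1 p.2 ∧ p.1 ∈ A.support}.ncard ≤ {p : V × V | A.Adj p.1 p.2}.ncard := by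
  refine Set.ncard_le_ncard_of_injOn (fun p => (p.1, A.someNeighbor p.1)) ?_ ?_
  · rintro ⟨u, v⟩ ⟨-, hu⟩
    exact adj_someNeighbor hu
  · rintro ⟨u, v⟩ ⟨huv, -⟩ ⟨u', v'⟩ ⟨hu'v', -⟩ heq
    obtain rfl : u = u' := congrArg Prod.fst heq
    rw [show v = v' from hB huv hu'v']

lemma ncard_darts_tail_notMem_support_le (hB : GraphMatching B)
    (h1 : ∀ u v, B.Adj u v → u ∈ A.support ∨ v ∈ A.support)
    (h3 : ∀ a b c d, B.Adj a b → A.Adj b c → B.Adj c d → a ∈ A.support ∨ d ∈ A.support) :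
    {p : V × V | B.Adj p.1 p.2 ∧ p.1 ∉ A.support}.ncard ≤ A.edgeSet.ncard := by
  have head_mem {u v : V} (huv : B.Adj u v) (hu : u ∉ A.support) : v ∈ A.support :=
    (h1 u v huv).resolve_left hu
  refine Set.ncard_le_ncard_of_injOn (fun p => s(p.2, A.someNeighbor p.2)) ?_ ?_
  · rintro ⟨u, v⟩ ⟨huv, hu⟩
    exact adj_someNeighbor (head_mem huv hu)
  · rintro ⟨u, v⟩ ⟨huv, hu⟩ ⟨u', v'⟩ ⟨hu'v', hu'⟩ heq
    simp only [Sym2.eq_iff] at heq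
    rcases heq with ⟨rfl, -⟩ | ⟨-, rfl⟩
    · rw [show u = u' from hB huv.symm hu'v'.symm]
    · have hvv' := adj_someNeighbor (head_mem huv hu)
      exact ((h3 u v _ u' huv hvv' hu'v'.symm).elim hu hu').elim

end SimpleGraph

theorem stmt10_general {V : Type} [Fintype V] (A B : SimpleGraph V)
    (hB : GraphMatching B)
    (h1 : ∀ u v, B.Adj u v → (∃ w, A.Adj u w) ∨ (∃ w, A.Adj v w))
    (h3 : ∀ a b c d, B.Adj a b → A.Adj b c → B.Adj c d →
      (∃ w, A.Adj a w) ∨ (∃ w, A.Adj d w)) :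
    2 * B.edgeSet.ncard ≤ 3 * A.edgeSet.ncard := by
  simp only [← mem_support] at h1 h3
  have hsplit : {p : V × V | B.Adj p.1 p.2} =
      {p | B.Adj p.1 p.2 ∧ p.1 ∈ A.support} ∪ {p | B.Adj p.1 p.2 ∧ p.1 ∉ A.support} := by
    ext p
    simp only [Set.mem_ofPred_eq, Set.mem_union]
    tauto
  have hcount := Set.ncard_union_le {p : V × V | B.Adj p.1 p.2 ∧ p.1 ∈ A.support}
    {p | B.Adj p.1 p.2 ∧ p.1 ∉ A.support}
  rw [← hsplit, ncard_setOf_adj] at hcount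
  have hcovered := ncard_darts_tail_mem_support_le (A := A) hB
  have huncovered := ncard_darts_tail_notMem_support_le hB h1 h3
  rw [ncard_setOf_adj] at hcovered
  omega

/-- Let `G = A ⊔ B` be a bipartite graph whose edge set is the
disjoint union of two matchings `A` and `B`.  If no component of `G` is a single
`B`-edge (expressed: every `B`-edge has an `A`-edge at one of its endpoints) and
no component is a `B–A–B` path of length 3 (expressed: every such `B–A–B`
pattern extends by an `A`-edge at one of its ends), then `|A| ≥ (2/3)·|B|`,
i.e. `2·|B| ≤ 3·|A|`. -/
theorem stmt10 {V : Type} [Fintype V] (A B : SimpleGraph V)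
    (hbip : ∃ f : V → Bool, ∀ u v, (A ⊔ B).Adj u v → f u ≠ f v)
    (hA : GraphMatching A) (hB : GraphMatching B)
    (hdisj : ∀ u v, ¬ (A.Adj u v ∧ B.Adj u v))
    (h1 : ∀ u v, B.Adj u v → (∃ w, A.Adj u w) ∨ (∃ w, A.Adj v w))
    (h3 : ∀ a b c d, B.Adj a b → A.Adj b c → B.Adj c d →
      (∃ w, A.Adj a w) ∨ (∃ w, A.Adj d w)) :
    2 * B.edgeSet.ncard ≤ 3 * A.edgeSet.ncard :=
  stmt10_general A B hB h1 h3
end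

section
/- Let I be an SPA-ST instance in which all preference lists of students and lecturers are strictly ordered (no ties). Then all stable matchings of I have the same cardinality; moreover, the set of students assigned is the same in every stable matching. -/
open scoped Classical
open Finset

variable {S P L : Type}

/-!
Fix a finite pool `P₀` of projects and run a student-proposing rejection process: every student
proposes to its best project of `P₀` not yet rejected, and while a project or a lecturer is
oversubscribed by the proposals, its worst proposer is rejected (project overloads first). With
strict preferences no stable matching `Z` contains a rejected pair: a proposer who is better
ranked but not assigned there in `Z` would block `Z`. When the proposals respect all
capacities, every student matched in `Z` still proposes; conversely, a proposal to a project
that is undersubscribed in `Z`, of a lecturer undersubscribed in `Z`, is a `Z`-assignment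
(otherwise it blocks), so lecturer by lecturer and project by project there are at most as many
proposers as `Z`-matched students. Hence every stable matching matches exactly the proposers.
-/

theorem card_filter_comp_le_of_card_fiber_le {α γ : Type*} [Fintype α] [DecidableEq γ]
    (f g : α → γ) (r : γ → Prop) [DecidablePred r]
    (h : ∀ c, r c → #{a | f a = c} ≤ #{a | g a = c}) :
    #{a | r (f a)} ≤ #{a | r (g a)} := by
  set T := (univ.image f ∪ univ.image g).filter r
  have hfiber : ∀ φ : α → γ, (∀ a, φ a ∈ univ.image f ∪ univ.image g) →
      #{a | r (φ a)} = ∑ c ∈ T, #{a | φ a = c} := by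
    intro φ hφ
    rw [card_eq_sum_card_fiberwise fun a ha => mem_filter.2 ⟨hφ a, (mem_filter.1 ha).2⟩]
    refine sum_congr rfl fun c hc => ?_
    rw [filter_filter]
    refine congrArg card (filter_congr fun a _ => ?_)
    exact ⟨And.right, fun ha => ⟨ha ▸ (mem_filter.1 hc).2, ha⟩⟩
  rw [hfiber f (by simp), hfiber g (by simp)]
  exact sum_le_sum fun c hc => h c (mem_filter.1 hc).2

namespace SPAST

variable (I : SPAST S P L)

def StrictStudentPrefs : Prop :=
  ∀ s p p', I.acc s p → I.acc s p' → I.sRank s p = I.sRank s p' → p = p'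

def StrictLecturerPrefs : Prop :=
  ∀ k s s', (∃ p, I.acc s p ∧ I.lec p = k) →
    (∃ p, I.acc s' p ∧ I.lec p = k) → I.lRank k s = I.lRank k s' → s = s'

/-- The candidates of `s` once the pairs in `D` have been rejected. -/
noncomputable def candidates (P₀ : Finset P) (D : Finset (S × P)) (s : S) : Finset P :=
  P₀.filter fun p => I.acc s p ∧ (s, p) ∉ D

noncomputable def proposal (P₀ : Finset P) (D : Finset (S × P)) (s : S) : Option P :=
  if h : (I.candidates P₀ D s).Nonempty then
    some (exists_min_image (I.candidates P₀ D s) (I.sRank s) h).choose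
  else none

def CandidatesContain (P₀ : Finset P) (D : Finset (S × P)) (Z : S → Option P) : Prop :=
  ∀ s p, Z s = some p → p ∈ I.candidates P₀ D s

variable {I} {P₀ : Finset P} {D : Finset (S × P)}

theorem lRank_lt_of_le_of_ne (hL : I.StrictLecturerPrefs) {s s₀ : S} {p p₀ : P}
    (hs : I.acc s p) (hs₀ : I.acc s₀ p₀) (hp₀ : I.lec p₀ = I.lec p)
    (hle : I.lRank (I.lec p) s ≤ I.lRank (I.lec p) s₀) (hne : s ≠ s₀) :
    I.lRank (I.lec p) s < I.lRank (I.lec p) s₀ :=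
  hle.lt_of_ne fun h => hne (hL _ s s₀ ⟨p, hs, rfl⟩ ⟨p₀, hs₀, hp₀⟩ h)

theorem proposal_spec {s : S} {p : P} (h : I.proposal P₀ D s = some p) :
    p ∈ I.candidates P₀ D s ∧
      ∀ q ∈ I.candidates P₀ D s, I.sRank s p ≤ I.sRank s q := by
  unfold proposal at h
  split_ifs at h with hne
  exact Option.some.inj h ▸ (exists_min_image _ (I.sRank s) hne).choose_spec

theorem proposal_isSome {s : S} {p : P} (hp : p ∈ I.candidates P₀ D s) :
    (I.proposal P₀ D s).isSome := by
  rw [proposal, dif_pos ⟨p, hp⟩]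
  rfl

theorem CandidatesContain.insert {Z : S → Option P} (hC : I.CandidatesContain P₀ D Z)
    {s : S} {p : P} (hne : Z s ≠ some p) : I.CandidatesContain P₀ (insert (s, p) D) Z := by
  intro s' p' h
  obtain ⟨hp', hacc, hD⟩ := mem_filter.1 (hC s' p' h)
  refine mem_filter.2 ⟨hp', hacc, fun hmem => ?_⟩
  rcases mem_insert.1 hmem with heq | hmem
  · obtain ⟨rfl, rfl⟩ := Prod.mk.inj heq
    exact hne h
  · exact hD hmem

theorem wantsToMove_of_proposal (hS : I.StrictStudentPrefs) {Z : S → Option P}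
    (hC : I.CandidatesContain P₀ D Z) {s : S} {p : P} (hs : I.proposal P₀ D s = some p)
    (hne : Z s ≠ some p) : WantsToMove I Z s p := by
  obtain ⟨hcand, hbest⟩ := proposal_spec hs
  have hacc := (mem_filter.1 hcand).2.1
  refine ⟨hacc, ?_⟩
  cases hZs : Z s with
  | none => exact Or.inl rfl
  | some q =>
    have hq := hC s q hZs
    refine Or.inr ⟨q, rfl, (hbest q hq).lt_of_ne fun h => hne ?_⟩
    rw [hZs, hS s p q hacc (mem_filter.1 hq).2.1 h]

variable [Fintype S]

@[simp]
theorem mem_projAssignees {X : S → Option P} {s : S} {p : P} :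
    s ∈ projAssignees X p ↔ X s = some p := by
  simp [projAssignees]

@[simp]
theorem mem_lecAssignees {X : S → Option P} {s : S} {k : L} :
    s ∈ lecAssignees I X k ↔ ∃ p, X s = some p ∧ I.lec p = k := by
  simp [lecAssignees]

variable (I) in
theorem card_lecAssignees_le {X Y : S → Option P} (k : L)
    (h : ∀ p, I.lec p = k → #(projAssignees X p) ≤ #(projAssignees Y p)) :
    #(lecAssignees I X k) ≤ #(lecAssignees I Y k) :=
  card_filter_comp_le_of_card_fiber_le X Y (fun o => ∃ p, o = some p ∧ I.lec p = k)
    (by rintro _ ⟨p, rfl, hp⟩; exact h p hp)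

variable (I) in
theorem msize_le {X Y : S → Option P}
    (h : ∀ k, #(lecAssignees I X k) ≤ #(lecAssignees I Y k)) : msize X ≤ msize Y := by
  have hlec : ∀ (Z : S → Option P) k,
      #{s | (Z s).map I.lec = some k} = #(lecAssignees I Z k) := by
    intro Z k
    simp [lecAssignees, Option.map_eq_some_iff]
  simpa [msize] using card_filter_comp_le_of_card_fiber_le
    (fun s => (X s).map I.lec) (fun s => (Y s).map I.lec)
    (fun o => o.isSome) fun o ho => by
      obtain ⟨k, rfl⟩ := Option.isSome_iff_exists.1 ho
      rw [hlec, hlec]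
      exact h k

theorem candidatesContain_empty {Z : S → Option P} (hZ : IsMatching I Z)
    (hP₀ : ∀ s p, Z s = some p → p ∈ P₀) : I.CandidatesContain P₀ ∅ Z :=
  fun s p h => mem_filter.2 ⟨hP₀ s p h, hZ.1 s p h, notMem_empty _⟩

section Blocking

variable {Z : S → Option P} {s s₀ : S} {p : P}

theorem blocks_of_mem_lecAssignees (hw : WantsToMove I Z s p) (hp : ¬ ProjFull I Z p)
    (hs : s ∈ lecAssignees I Z (I.lec p)) : Blocks I Z s p := by
  by_cases hk : LecFull I Z (I.lec p)
  · exact ⟨hw, Or.inr (Or.inl ⟨hp, hk, Or.inl hs⟩)⟩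
  · exact ⟨hw, Or.inl ⟨hp, hk⟩⟩

theorem blocks_of_lt_lecAssignee (hw : WantsToMove I Z s p) (hp : ¬ ProjFull I Z p)
    (hs₀ : s₀ ∈ lecAssignees I Z (I.lec p))
    (hlt : I.lRank (I.lec p) s < I.lRank (I.lec p) s₀) :
    Blocks I Z s p := by
  by_cases hk : LecFull I Z (I.lec p)
  · exact ⟨hw, Or.inr (Or.inl ⟨hp, hk, Or.inr ⟨s₀, hs₀, hlt⟩⟩)⟩
  · exact ⟨hw, Or.inl ⟨hp, hk⟩⟩

theorem blocks_of_lt_projAssignee (hw : WantsToMove I Z s p) (hs₀ : Z s₀ = some p)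
    (hlt : I.lRank (I.lec p) s < I.lRank (I.lec p) s₀) : Blocks I Z s p := by
  by_cases hp : ProjFull I Z p
  · exact ⟨hw, Or.inr (Or.inr ⟨hp, s₀, mem_projAssignees.2 hs₀, hlt⟩)⟩
  · exact blocks_of_lt_lecAssignee hw hp (mem_lecAssignees.2 ⟨p, hs₀, rfl⟩) hlt

end Blocking

variable (I P₀ D) in
def WithinCapacity (X : S → Option P) : Prop :=
  (∀ p, #(projAssignees X p) ≤ I.cap p) ∧ (∀ k, #(lecAssignees I X k) ≤ I.dcap k)

variable (I P₀ D) in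
/-- A lecturer overload is only resolved once no project is oversubscribed: this is what
makes a rejected student witness an undersubscribed project in `ne_of_isRejectable_lecturer`. -/
def IsRejectable (s : S) (p : P) : Prop :=
  I.proposal P₀ D s = some p ∧
  ((I.cap p < #(projAssignees (I.proposal P₀ D) p) ∧
      ∀ s' ∈ projAssignees (I.proposal P₀ D) p,
        I.lRank (I.lec p) s' ≤ I.lRank (I.lec p) s) ∨
    ((∀ q, #(projAssignees (I.proposal P₀ D) q) ≤ I.cap q) ∧
      I.dcap (I.lec p) < #(lecAssignees I (I.proposal P₀ D) (I.lec p)) ∧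
      ∀ s' ∈ lecAssignees I (I.proposal P₀ D) (I.lec p),
        I.lRank (I.lec p) s' ≤ I.lRank (I.lec p) s))

theorem exists_isRejectable (h : ¬ I.WithinCapacity (I.proposal P₀ D)) :
    ∃ s p, I.IsRejectable P₀ D s p := by
  set X := I.proposal P₀ D
  by_cases hproj : ∀ p, #(projAssignees X p) ≤ I.cap p
  · obtain ⟨k, hk⟩ : ∃ k, I.dcap k < #(lecAssignees I X k) := by
      by_contra! hk
      exact h ⟨hproj, hk⟩
    obtain ⟨s, hs, hworst⟩ := exists_max_image (lecAssignees I X k) (I.lRank k)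
      (card_pos.1 (by omega))
    obtain ⟨p, hsp, rfl⟩ := mem_lecAssignees.1 hs
    exact ⟨s, p, hsp, Or.inr ⟨hproj, hk, hworst⟩⟩
  · obtain ⟨p, hp⟩ := not_forall.1 hproj
    obtain ⟨s, hs, hworst⟩ := exists_max_image (projAssignees X p) (I.lRank (I.lec p))
      (card_pos.1 (by omega))
    exact ⟨s, p, mem_projAssignees.1 hs, Or.inl ⟨not_le.1 hp, hworst⟩⟩

section Safety

variable {Z : S → Option P} {s₀ : S} {p : P}

theorem ne_of_isRejectable_project (hL : I.StrictLecturerPrefs) (hS : I.StrictStudentPrefs)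
    (hZ : Stable I Z) (hC : I.CandidatesContain P₀ D Z)
    (hover : I.cap p < #(projAssignees (I.proposal P₀ D) p))
    (hworst : ∀ s ∈ projAssignees (I.proposal P₀ D) p,
      I.lRank (I.lec p) s ≤ I.lRank (I.lec p) s₀) :
    Z s₀ ≠ some p := by
  intro hZs₀
  obtain ⟨s, hs, hsZ⟩ := exists_mem_notMem_of_card_lt_card ((hZ.1.2.1 p).trans_lt hover)
  rw [mem_projAssignees] at hsZ
  have hw := wantsToMove_of_proposal hS hC (mem_projAssignees.1 hs) hsZ
  have hne : s ≠ s₀ := by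
    rintro rfl
    exact hsZ hZs₀
  exact hZ.2 s p (blocks_of_lt_projAssignee hw hZs₀
    (lRank_lt_of_le_of_ne hL hw.1 (hZ.1.1 _ _ hZs₀) rfl (hworst s hs) hne))

theorem ne_of_isRejectable_lecturer (hL : I.StrictLecturerPrefs) (hS : I.StrictStudentPrefs)
    (hZ : Stable I Z) (hC : I.CandidatesContain P₀ D Z)
    (hproj : ∀ q, #(projAssignees (I.proposal P₀ D) q) ≤ I.cap q)
    (hover : I.dcap (I.lec p) < #(lecAssignees I (I.proposal P₀ D) (I.lec p)))
    (hworst : ∀ s ∈ lecAssignees I (I.proposal P₀ D) (I.lec p),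
      I.lRank (I.lec p) s ≤ I.lRank (I.lec p) s₀) :
    Z s₀ ≠ some p := by
  intro hZs₀
  obtain ⟨q, hqp, hq⟩ : ∃ q, I.lec q = I.lec p ∧
      #(projAssignees Z q) < #(projAssignees (I.proposal P₀ D) q) := by
    by_contra! h
    exact ((hZ.1.2.2 _).trans_lt hover).not_ge (card_lecAssignees_le I _ h)
  obtain ⟨s, hs, hsZ⟩ := exists_mem_notMem_of_card_lt_card hq
  rw [mem_projAssignees] at hs hsZ
  have hw := wantsToMove_of_proposal hS hC hs hsZ
  have hqfree : ¬ ProjFull I Z q := fun h => by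
    have := hproj q
    unfold ProjFull at h
    omega
  by_cases hsk : s ∈ lecAssignees I Z (I.lec q)
  · exact hZ.2 s q (blocks_of_mem_lecAssignees hw hqfree hsk)
  have hs₀k : s₀ ∈ lecAssignees I Z (I.lec q) := mem_lecAssignees.2 ⟨p, hZs₀, hqp.symm⟩
  have hne : s ≠ s₀ := by
    rintro rfl
    exact hsk hs₀k
  have hle : I.lRank (I.lec q) s ≤ I.lRank (I.lec q) s₀ :=
    hqp ▸ hworst s (mem_lecAssignees.2 ⟨q, hs, hqp⟩)
  exact hZ.2 s q (blocks_of_lt_lecAssignee hw hqfree hs₀k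
    (lRank_lt_of_le_of_ne hL hw.1 (hZ.1.1 _ _ hZs₀) hqp.symm hle hne))

theorem ne_of_isRejectable (hL : I.StrictLecturerPrefs) (hS : I.StrictStudentPrefs)
    (hZ : Stable I Z) (hC : I.CandidatesContain P₀ D Z) (hr : I.IsRejectable P₀ D s₀ p) :
    Z s₀ ≠ some p := by
  rcases hr.2 with ⟨hover, hworst⟩ | ⟨hproj, hover, hworst⟩
  · exact ne_of_isRejectable_project hL hS hZ hC hover hworst
  · exact ne_of_isRejectable_lecturer hL hS hZ hC hproj hover hworst

end Safety

theorem exists_withinCapacity (hS : I.StrictStudentPrefs) (hL : I.StrictLecturerPrefs)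
    (P₀ : Finset P) (D : Finset (S × P))
    (hD : ∀ Z, Stable I Z → (∀ s p, Z s = some p → p ∈ P₀) →
      I.CandidatesContain P₀ D Z) :
    ∃ D', I.WithinCapacity (I.proposal P₀ D') ∧
      ∀ Z, Stable I Z → (∀ s p, Z s = some p → p ∈ P₀) →
        I.CandidatesContain P₀ D' Z := by
  by_cases hcap : I.WithinCapacity (I.proposal P₀ D)
  · exact ⟨D, hcap, hD⟩
  obtain ⟨s, p, hr⟩ := exists_isRejectable hcap
  have hcand := mem_filter.1 (proposal_spec hr.1).1
  have : #(univ ×ˢ P₀ \ insert (s, p) D) < #(univ ×ˢ P₀ \ D) := by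
    rw [sdiff_insert]
    exact card_erase_lt_of_mem (mem_sdiff.2 ⟨by simp [hcand.1], hcand.2.2⟩)
  exact exists_withinCapacity hS hL P₀ (insert (s, p) D)
    fun Z hZ hZP => (hD Z hZ hZP).insert (ne_of_isRejectable hL hS hZ (hD Z hZ hZP) hr)
termination_by #(univ ×ˢ P₀ \ D)

section Endgame

variable {Z : S → Option P}

theorem projAssignees_proposal_subset (hS : I.StrictStudentPrefs) (hZ : Stable I Z)
    (hC : I.CandidatesContain P₀ D Z) {p : P} (hp : ¬ ProjFull I Z p)
    (hk : ¬ LecFull I Z (I.lec p)) :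
    projAssignees (I.proposal P₀ D) p ⊆ projAssignees Z p := by
  intro s hs
  rw [mem_projAssignees] at hs ⊢
  by_contra hne
  exact hZ.2 s p ⟨wantsToMove_of_proposal hS hC hs hne, Or.inl ⟨hp, hk⟩⟩

theorem filter_isSome_eq_filter_proposal_isSome (hS : I.StrictStudentPrefs) (hZ : Stable I Z)
    (hC : I.CandidatesContain P₀ D Z) (hcap : I.WithinCapacity (I.proposal P₀ D)) :
    univ.filter (fun s => (Z s).isSome) = univ.filter (fun s => (I.proposal P₀ D s).isSome) := by
  refine eq_of_subset_of_card_le (fun s hs => ?_) (msize_le I fun k => ?_)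
  · obtain ⟨p, hp⟩ := Option.isSome_iff_exists.1 (mem_filter.1 hs).2
    exact mem_filter.2 ⟨mem_univ s, proposal_isSome (hC s p hp)⟩
  by_cases hk : LecFull I Z k
  · exact (hcap.2 k).trans hk.ge
  refine card_lecAssignees_le I k fun p hpk => ?_
  by_cases hp : ProjFull I Z p
  · exact (hcap.1 p).trans hp.ge
  exact card_le_card (projAssignees_proposal_subset hS hZ hC hp (hpk ▸ hk))

end Endgame

end SPAST

/-- In an SPA-ST instance in which all preference lists are
strictly ordered (no ties among acceptable partners), all stable matchings have
the same cardinality and, moreover, exactly the same set of students is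
assigned in every stable matching. -/
theorem stmt11 [Fintype S] (I : SPAST S P L)
    (hstrictS : ∀ s p p', I.acc s p → I.acc s p' →
      I.sRank s p = I.sRank s p' → p = p')
    (hstrictL : ∀ k s s', (∃ p, I.acc s p ∧ I.lec p = k) →
      (∃ p, I.acc s' p ∧ I.lec p = k) → I.lRank k s = I.lRank k s' → s = s')
    (M N : S → Option P) (hM : Stable I M) (hN : Stable I N) :
    msize M = msize N ∧ ∀ s, (M s).isSome ↔ (N s).isSome := by
  set P₀ : Finset P := univ.biUnion fun s => (M s).toFinset ∪ (N s).toFinset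
  have hP₀M : ∀ s p, M s = some p → p ∈ P₀ := fun s p h =>
    mem_biUnion.2 ⟨s, mem_univ s, by simp [h]⟩
  have hP₀N : ∀ s p, N s = some p → p ∈ P₀ := fun s p h =>
    mem_biUnion.2 ⟨s, mem_univ s, by simp [h]⟩
  obtain ⟨D, hcap, hC⟩ := I.exists_withinCapacity hstrictS hstrictL P₀ ∅
    fun Z hZ hZP => SPAST.candidatesContain_empty hZ.1 hZP
  have hMN : univ.filter (fun s => (M s).isSome) = univ.filter (fun s => (N s).isSome) :=
    (SPAST.filter_isSome_eq_filter_proposal_isSome hstrictS hM (hC M hM hP₀M) hcap).trans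
      (SPAST.filter_isSome_eq_filter_proposal_isSome hstrictS hN (hC N hN hP₀N) hcap).symm
  exact ⟨congrArg card hMN, fun s => by simpa using Finset.ext_iff.1 hMN s⟩
end

section
/- With the mapped graph G' constructed from matchings M and M_opt of an SPA-ST instance as before: if a clone l^{c,r} has an M'-edge to student s_i with (s_i,p_j) ∈ M, and l^{c,r} also has an M'_opt-edge to a student s_{i'} whose project in M_opt is not p_j, then |M(p_j)| > |M_opt(p_j)|; in particular p_j is undersubscribed in M_opt. -/
open scoped Classical
open Finset

variable {S P L : Type}

/-! A clone carrying an `M'`-edge for `p_j` together with an `M'_opt`-edge for another project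
is not one of the clones on which an `M'`-edge and an `M'_opt`-edge of `p_j` were paired.
Every paired clone is reached by the `M'`-edge of a distinct student of `M(p_j) \ M_opt(p_j)`
other than `s_i`, so fewer than `|M(p_j) \ M_opt(p_j)|` clones are paired. As the pairing is
maximal, this forces `|M_opt(p_j) \ M(p_j)| < |M(p_j) \ M_opt(p_j)|`, i.e.
`|M_opt(p_j)| < |M(p_j)| ≤ c_j`. -/

section PairedClones

variable {C : Type} [Fintype S]

noncomputable def pairedClones [Fintype C] (M Mopt : S → Option P) (Eopt E : S → Option C)
    (p : P) : Finset C :=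
  univ.filter fun c =>
    ∃ s s', Eopt s = some c ∧ Mopt s = some p ∧ E s' = some c ∧ M s' = some p

lemma filter_eq_some_and_ne_eq_sdiff (M M' : S → Option P) (p : P) :
    univ.filter (fun s => M s = some p ∧ M' s ≠ some p) =
      projAssignees M p \ projAssignees M' p := by
  ext s
  simp [projAssignees]

lemma mem_projAssignees_sdiff_of_edge {M Mopt : S → Option P} {E : S → Option C}
    (hE : ∀ s, (E s).isSome → ∃ p, M s = some p ∧ Mopt s ≠ some p)
    {s : S} {c : C} {p : P} (hs : E s = some c) (hsp : M s = some p) :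
    s ∈ projAssignees M p \ projAssignees Mopt p := by
  obtain ⟨q, hq, hne⟩ := hE s (by simp [hs])
  obtain rfl : q = p := Option.some_injective _ (hq.symm.trans hsp)
  simpa [projAssignees, hsp] using hne

lemma card_pairedClones_lt [Fintype C] {M Mopt : S → Option P} {Eopt E : S → Option C}
    (hE : ∀ s, (E s).isSome → ∃ p, M s = some p ∧ Mopt s ≠ some p)
    (hEoptInj : ∀ s s' c, Eopt s = some c → Eopt s' = some c → s = s')
    {c : C} {si : S} {p : P} (hsi : E si = some c) (hsip : M si = some p)
    (hc : ∃ s', Eopt s' = some c ∧ Mopt s' ≠ some p) :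
    #(pairedClones M Mopt Eopt E p) < #(projAssignees M p \ projAssignees Mopt p) := by
  have hc_unpaired : c ∉ pairedClones M Mopt Eopt E p := by
    obtain ⟨s₀, hs₀, hs₀p⟩ := hc
    intro hpaired
    obtain ⟨-, s, -, hs, hsp, -⟩ := mem_filter.1 hpaired
    exact hs₀p (hEoptInj s s₀ c hs hs₀ ▸ hsp)
  have hsurj : Set.SurjOn (fun s => (E s).getD c)
      ((projAssignees M p \ projAssignees Mopt p).erase si) (pairedClones M Mopt Eopt E p) := by
    intro c' hc'
    obtain ⟨-, _, s', _, _, hs', hs'p⟩ := mem_filter.1 hc'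
    have hs'si : s' ≠ si := by
      rintro rfl
      obtain rfl : c' = c := Option.some_injective _ (hs'.symm.trans hsi)
      exact hc_unpaired hc'
    refine ⟨s', mem_erase.2 ⟨hs'si, mem_projAssignees_sdiff_of_edge hE hs' hs'p⟩, ?_⟩
    simp [hs']
  calc #(pairedClones M Mopt Eopt E p)
      ≤ #((projAssignees M p \ projAssignees Mopt p).erase si) := card_le_card_of_surjOn _ hsurj
    _ < #(projAssignees M p \ projAssignees Mopt p) :=
      card_erase_lt_of_mem (mem_projAssignees_sdiff_of_edge hE hsi hsip)

end PairedClones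

theorem stmt14_general {C : Type} [Fintype S] [Fintype C]
    (I : SPAST S P L) (M Mopt : S → Option P)
    (hM : IsMatching I M)
    (Eopt E : S → Option C)
    (hEoptInj : ∀ s s' c, Eopt s = some c → Eopt s' = some c → s = s')
    (hEDom : ∀ s, (E s).isSome ↔ ∃ p, M s = some p ∧ Mopt s ≠ some p)
    (hpair : ∀ p : P,
      (Finset.univ.filter (fun c => ∃ s s', Eopt s = some c ∧ Mopt s = some p ∧
          E s' = some c ∧ M s' = some p)).card =
        min (Finset.univ.filter (fun s => Mopt s = some p ∧ M s ≠ some p)).card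
            (Finset.univ.filter (fun s => M s = some p ∧ Mopt s ≠ some p)).card)
    (c : C) (si : S) (pj : P)
    (h1 : E si = some c) (h2 : M si = some pj)
    (h3 : ∃ s', Eopt s' = some c ∧ Mopt s' ≠ some pj) :
    (projAssignees Mopt pj).card < (projAssignees M pj).card ∧
    (projAssignees Mopt pj).card < I.cap pj := by
  have hpaired := card_pairedClones_lt (fun s => (hEDom s).1) hEoptInj h1 h2 h3
  have hmin : #(pairedClones M Mopt Eopt E pj) =
      min #(projAssignees Mopt pj \ projAssignees M pj)
        #(projAssignees M pj \ projAssignees Mopt pj) := by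
    rw [← filter_eq_some_and_ne_eq_sdiff, ← filter_eq_some_and_ne_eq_sdiff]
    exact hpair pj
  rw [hmin, min_lt_iff, lt_self_iff_false, or_false, card_sdiff_lt_card_sdiff_iff] at hpaired
  exact ⟨hpaired, hpaired.trans_le (hM.2.1 pj)⟩

/-- With the mapped graph `G'` constructed from matchings `M`
and `Mopt` of an SPA-ST instance as before (clones `C`, edge assignments `E` for
`M \ Mopt` and `Eopt` for `Mopt \ M`, with maximal same-project pairing): if a
clone `c` carries an `E`-edge to `si` with `(si, pj) ∈ M` and also an
`Eopt`-edge to a student whose `Mopt`-project is not `pj`, then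
`|Mopt(pj)| < |M(pj)|`; in particular `pj` is undersubscribed in `Mopt`. -/
theorem stmt14 {C : Type} [Fintype S] [Fintype P] [Fintype C]
    (I : SPAST S P L) (M Mopt : S → Option P)
    (hM : IsMatching I M) (hMopt : IsMatching I Mopt)
    (toLec : C → L)
    (hcount : ∀ k, (Finset.univ.filter (fun c => toLec c = k)).card =
      I.dcap k - ((lecAssignees I M k) ∩ (lecAssignees I Mopt k)).card)
    (Eopt E : S → Option C)
    (hEoptDom : ∀ s, (Eopt s).isSome ↔ ∃ p, Mopt s = some p ∧ M s ≠ some p)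
    (hEoptLec : ∀ s c p, Eopt s = some c → Mopt s = some p → toLec c = I.lec p)
    (hEoptInj : ∀ s s' c, Eopt s = some c → Eopt s' = some c → s = s')
    (hEDom : ∀ s, (E s).isSome ↔ ∃ p, M s = some p ∧ Mopt s ≠ some p)
    (hELec : ∀ s c p, E s = some c → M s = some p → toLec c = I.lec p)
    (hEInj : ∀ s s' c, E s = some c → E s' = some c → s = s')
    (hpair : ∀ p : P,
      (Finset.univ.filter (fun c => ∃ s s', Eopt s = some c ∧ Mopt s = some p ∧
          E s' = some c ∧ M s' = some p)).card =
        min (Finset.univ.filter (fun s => Mopt s = some p ∧ M s ≠ some p)).card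
            (Finset.univ.filter (fun s => M s = some p ∧ Mopt s ≠ some p)).card)
    (c : C) (si : S) (pj : P)
    (h1 : E si = some c) (h2 : M si = some pj)
    (h3 : ∃ s', Eopt s' = some c ∧ Mopt s' ≠ some pj) :
    (projAssignees Mopt pj).card < (projAssignees M pj).card ∧
    (projAssignees Mopt pj).card < I.cap pj :=
  stmt14_general I M Mopt hM Eopt E hEoptInj hEDom hpair c si pj h1 h2 h3
end
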